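/- arXiv:1902.01596 — 4 statements merged into one kernel-verified Lean document; each statement's English description precedes it below -/
import Mathlib

section
/- Let H be a real inner product space, x : ι → H a family of points, and let C, C' be disjoint nonempty finite subsets of ι. Then Ward's linkage satisfies the centroid formula δ(C,C') = (|C|·|C'|/(|C|+|C'|)) · ‖x̄_C − x̄_{C'}‖², where x̄_C = (1/|C|) ∑_{i∈C} x_i is the centroid of C. -/
open Finset

/-- The centroid `x̄_C = (1/|C|) ∑_{i∈C} x_i` of the cluster `C`. -/
noncomputable def centroid {ι H : Type*} [NormedAddCommGroup H] [InnerProductSpace ℝ H]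
    (x : ι → H) (C : Finset ι) : H :=
  (C.card : ℝ)⁻¹ • ∑ i ∈ C, x i

/-- The inertia (error sum of squares) `I(C) = ∑_{i∈C} ‖x_i − x̄_C‖²` of the cluster `C`. -/
noncomputable def inertia {ι H : Type*} [NormedAddCommGroup H] [InnerProductSpace ℝ H]
    (x : ι → H) (C : Finset ι) : ℝ :=
  ∑ i ∈ C, ‖x i - centroid x C‖ ^ 2

/-- The similarity sum `S(C) = ∑_{(i,j)∈C×C} ⟨x_i, x_j⟩` of the cluster `C`. -/
noncomputable def simSum {ι H : Type*} [NormedAddCommGroup H] [InnerProductSpace ℝ H]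
    (x : ι → H) (C : Finset ι) : ℝ :=
  ∑ i ∈ C, ∑ j ∈ C, (inner ℝ (x i) (x j) : ℝ)

/-- Ward's linkage `δ(C,C') = I(C ∪ C') − I(C) − I(C')`. -/
noncomputable def ward {ι H : Type*} [DecidableEq ι] [NormedAddCommGroup H]
    [InnerProductSpace ℝ H] (x : ι → H) (C C' : Finset ι) : ℝ :=
  inertia x (C ∪ C') - inertia x C - inertia x C'

/-!
Expanding squares, `I(C) = ∑_{i∈C} ‖x_i‖² − |C|·‖x̄_C‖²`. For disjoint clusters the sums of
squares cancel in `δ(C,C')`, and the centroid of `C ∪ C'` is the barycenter of `x̄_C` and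
`x̄_{C'}` with weights `|C|` and `|C'|`; so `δ(C,C')` is the inertia of these two point masses
about their barycenter, which is `|C||C'|/(|C|+|C'|) · ‖x̄_C − x̄_{C'}‖²`.
-/

section Barycenter

variable {E : Type*} [NormedAddCommGroup E] [InnerProductSpace ℝ E]

theorem weighted_norm_sq_sub_norm_sq_barycenter {a b : ℝ} (ha : 0 ≤ a) (hb : 0 ≤ b) (u v : E) :
    a * ‖u‖ ^ 2 + b * ‖v‖ ^ 2 - (a + b) * ‖(a + b)⁻¹ • (a • u + b • v)‖ ^ 2 =
      a * b / (a + b) * ‖u - v‖ ^ 2 := by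
  rcases (add_nonneg ha hb).eq_or_lt with hab | hab
  · obtain ⟨rfl, rfl⟩ : a = 0 ∧ b = 0 := ⟨by linarith, by linarith⟩
    simp
  rw [norm_smul, mul_pow, norm_add_sq_real, norm_sub_sq_real, norm_smul, norm_smul,
    real_inner_smul_left, real_inner_smul_right, Real.norm_eq_abs, Real.norm_eq_abs,
    Real.norm_eq_abs, abs_of_nonneg ha, abs_of_nonneg hb, abs_of_pos (inv_pos.2 hab)]
  field_simp
  ring

end Barycenter

section Cluster

variable {ι H : Type*} [NormedAddCommGroup H] [InnerProductSpace ℝ H] (x : ι → H)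

theorem card_smul_centroid (C : Finset ι) : (#C : ℝ) • centroid x C = ∑ i ∈ C, x i := by
  rcases C.eq_empty_or_nonempty with rfl | hC
  · simp
  · rw [_root_.centroid, smul_inv_smul₀ (by exact_mod_cast hC.card_ne_zero)]

theorem inertia_eq_sum_norm_sq_sub (C : Finset ι) :
    inertia x C = ∑ i ∈ C, ‖x i‖ ^ 2 - #C * ‖centroid x C‖ ^ 2 := by
  have hcross : ∑ i ∈ C, inner ℝ (x i) (centroid x C) = #C * ‖centroid x C‖ ^ 2 := by
    rw [← sum_inner, ← card_smul_centroid, real_inner_smul_left, real_inner_self_eq_norm_sq]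
  simp only [inertia, norm_sub_sq_real, sum_add_distrib, sum_sub_distrib, ← mul_sum, hcross,
    sum_const, nsmul_eq_mul]
  ring

theorem centroid_union_of_disjoint [DecidableEq ι] {C C' : Finset ι} (h : Disjoint C C') :
    centroid x (C ∪ C') =
      ((#C : ℝ) + #C')⁻¹ • ((#C : ℝ) • centroid x C + (#C' : ℝ) • centroid x C') := by
  rw [card_smul_centroid, card_smul_centroid, ← sum_union h, _root_.centroid,
    card_union_of_disjoint h, Nat.cast_add]

end Cluster

theorem ward_eq_centroid_formula_general
    {ι H : Type*} [DecidableEq ι] [NormedAddCommGroup H] [InnerProductSpace ℝ H]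
    (x : ι → H) (C C' : Finset ι)
    (hdisj : Disjoint C C') :
    ward x C C' =
      (C.card : ℝ) * C'.card / (C.card + C'.card) * ‖centroid x C - centroid x C'‖ ^ 2 := by
  have hcard : (#(C ∪ C') : ℝ) = #C + #C' := by
    rw [card_union_of_disjoint hdisj, Nat.cast_add]
  rw [ward, inertia_eq_sum_norm_sq_sub, inertia_eq_sum_norm_sq_sub, inertia_eq_sum_norm_sq_sub,
    sum_union hdisj, hcard, centroid_union_of_disjoint x hdisj,
    ← weighted_norm_sq_sub_norm_sq_barycenter (Nat.cast_nonneg _) (Nat.cast_nonneg _)]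
  ring

/-- Centroid formula for Ward's linkage:
`δ(C,C') = (|C|·|C'|/(|C|+|C'|)) · ‖x̄_C − x̄_{C'}‖²`. -/
theorem ward_eq_centroid_formula
    {ι H : Type*} [DecidableEq ι] [NormedAddCommGroup H] [InnerProductSpace ℝ H]
    (x : ι → H) (C C' : Finset ι) (hC : C.Nonempty) (hC' : C'.Nonempty)
    (hdisj : Disjoint C C') :
    ward x C C' =
      (C.card : ℝ) * C'.card / (C.card + C'.card) * ‖centroid x C - centroid x C'‖ ^ 2 :=
  ward_eq_centroid_formula_general x C C' hdisj
end

section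
/- Let H be a real inner product space, x : ι → H a family of points, and let C, C' be disjoint nonempty finite subsets of ι. Then Ward's linkage is nonnegative: I(C ∪ C') ≥ I(C) + I(C'), i.e. δ(C,C') ≥ 0, where I(C) = ∑_{i∈C} ‖x_i − x̄_C‖² with x̄_C = (1/|C|) ∑_{i∈C} x_i. -/
open Finset

/-! The centroid minimises the sum of squared distances (Huygens' decomposition below), so the
inertia of each part is at most its sum of squared distances to the centroid of `C ∪ C'`; for
disjoint parts these two sums add up to `I(C ∪ C')`. -/

section Inertia

variable {ι H : Type*} [NormedAddCommGroup H] [InnerProductSpace ℝ H]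

lemma sum_sub_centroid (x : ι → H) (C : Finset ι) : ∑ i ∈ C, (x i - centroid x C) = 0 := by
  rcases C.eq_empty_or_nonempty with rfl | hC
  · simp
  have hcard : (#C : ℝ) ≠ 0 := by exact_mod_cast hC.card_pos.ne'
  rw [sum_sub_distrib, sum_const, _root_.centroid, ← Nat.cast_smul_eq_nsmul ℝ, smul_smul,
    mul_inv_cancel₀ hcard, one_smul, sub_self]

lemma sum_norm_sub_sq_eq_inertia_add (x : ι → H) (C : Finset ι) (b : H) :
    ∑ i ∈ C, ‖x i - b‖ ^ 2 = inertia x C + #C * ‖centroid x C - b‖ ^ 2 := by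
  set μ := centroid x C
  have hsplit : ∀ i ∈ C, ‖x i - b‖ ^ 2
      = ‖x i - μ‖ ^ 2 + 2 * inner ℝ (x i - μ) (μ - b) + ‖μ - b‖ ^ 2 := fun i _ => by
    rw [← norm_add_sq_real, sub_add_sub_cancel]
  have hcross : ∑ i ∈ C, 2 * (inner ℝ (x i - μ) (μ - b) : ℝ) = 0 := by
    rw [← mul_sum, ← sum_inner, sum_sub_centroid, inner_zero_left, mul_zero]
  rw [sum_congr rfl hsplit, sum_add_distrib, sum_add_distrib, hcross, add_zero, sum_const,
    nsmul_eq_mul, inertia]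

lemma inertia_le_sum_norm_sub_sq (x : ι → H) (C : Finset ι) (b : H) :
    inertia x C ≤ ∑ i ∈ C, ‖x i - b‖ ^ 2 := by
  rw [sum_norm_sub_sq_eq_inertia_add]
  exact le_add_of_nonneg_right (by positivity)

lemma inertia_add_inertia_le_inertia_union [DecidableEq ι] (x : ι → H) {C C' : Finset ι}
    (hdisj : Disjoint C C') : inertia x C + inertia x C' ≤ inertia x (C ∪ C') := by
  conv_rhs => rw [inertia, sum_union hdisj]
  exact add_le_add (inertia_le_sum_norm_sub_sq x C _) (inertia_le_sum_norm_sub_sq x C' _)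

end Inertia

theorem ward_nonneg_general
    {ι H : Type*} [DecidableEq ι] [NormedAddCommGroup H] [InnerProductSpace ℝ H]
    (x : ι → H) (C C' : Finset ι)
    (hdisj : Disjoint C C') :
    inertia x C + inertia x C' ≤ inertia x (C ∪ C') ∧ 0 ≤ ward x C C' := by
  have hle := inertia_add_inertia_le_inertia_union x hdisj
  exact ⟨hle, by rwa [ward, sub_sub, sub_nonneg]⟩

/-- Ward's linkage is nonnegative: `I(C ∪ C') ≥ I(C) + I(C')`, i.e. `δ(C,C') ≥ 0`. -/
theorem ward_nonneg
    {ι H : Type*} [DecidableEq ι] [NormedAddCommGroup H] [InnerProductSpace ℝ H]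
    (x : ι → H) (C C' : Finset ι) (hC : C.Nonempty) (hC' : C'.Nonempty)
    (hdisj : Disjoint C C') :
    inertia x C + inertia x C' ≤ inertia x (C ∪ C') ∧ 0 ≤ ward x C C' :=
  ward_nonneg_general x C C' hdisj
end

section
/- Let s : {1,…,p} × {1,…,p} → ℝ be a similarity matrix, and for 1 ≤ r ≤ p and 1 ≤ l ≤ p define the forward pencil P(r,l) = ∑_{1≤a,b≤r, |a−b|<l} s(a,b) and the backward pencil P̄(r,l) = ∑_{r≤a,b≤p, |a−b|<l} s(a,b). Then for all 1 ≤ i ≤ j ≤ p and every l with 1 ≤ l ≤ j − i + 1, P(j,l) + P̄(i,l) − P(p,l) = ∑_{i≤a,b≤j, |a−b|<l} s(a,b). -/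
/-! Two indices of the band `|a - b| < l` with `l ≤ j - i + 1` cannot lie one below `i` and the
other above `j`. Hence the squares `[1, j]²` and `[i, p]²` cover the band part of `[1, p]²`, and
they meet in `[i, j]²`: the identity is inclusion–exclusion for these two squares. -/

open Finset

/-- The forward pencil `P(r,l) = ∑_{1≤a,b≤r, |a−b|<l} s(a,b)`. -/
def pencilF (s : ℕ → ℕ → ℝ) (r l : ℕ) : ℝ :=
  ∑ a ∈ Finset.Icc 1 r, ∑ b ∈ Finset.Icc 1 r,
    if |(a : ℤ) - (b : ℤ)| < (l : ℤ) then s a b else 0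

/-- The backward pencil `P̄(r,l) = ∑_{r≤a,b≤p, |a−b|<l} s(a,b)`. -/
def pencilB (s : ℕ → ℕ → ℝ) (p r l : ℕ) : ℝ :=
  ∑ a ∈ Finset.Icc r p, ∑ b ∈ Finset.Icc r p,
    if |(a : ℤ) - (b : ℤ)| < (l : ℤ) then s a b else 0

theorem sum_Icc_sq_add_sum_Icc_sq {α M : Type*} [LinearOrder α] [LocallyFiniteOrder α]
    [AddCommMonoid M] (f : α → α → M) {m i j p : α} (hmi : m ≤ i) (hjp : j ≤ p)
    (hf : ∀ a b, a < i → j < b → f a b = 0 ∧ f b a = 0) :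
    (∑ a ∈ Icc m j, ∑ b ∈ Icc m j, f a b) + ∑ a ∈ Icc i p, ∑ b ∈ Icc i p, f a b =
      (∑ a ∈ Icc m p, ∑ b ∈ Icc m p, f a b) + ∑ a ∈ Icc i j, ∑ b ∈ Icc i j, f a b := by
  simp only [← sum_product' (f := f)]
  have hinter : Icc m j ∩ Icc i p = Icc i j := by
    ext x
    simp only [mem_inter, mem_Icc]
    exact ⟨fun h => ⟨h.2.1, h.1.2⟩, fun h => ⟨⟨hmi.trans h.1, h.2⟩, h.1, h.2.trans hjp⟩⟩
  rw [← sum_union_inter, product_inter_product, hinter]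
  congr 1
  have hjp' : Icc m j ⊆ Icc m p := Icc_subset_Icc le_rfl hjp
  have hmi' : Icc i p ⊆ Icc m p := Icc_subset_Icc hmi le_rfl
  refine sum_subset (union_subset (product_subset_product hjp' hjp')
    (product_subset_product hmi' hmi')) fun ⟨a, b⟩ hab hnot => ?_
  simp only [mem_product, mem_Icc] at hab
  obtain ⟨⟨hma, hap⟩, hmb, hbp⟩ := hab
  simp only [mem_union, mem_product, mem_Icc, hma, hap, hmb, hbp, true_and, and_true,
    not_and_or, not_le, not_or] at hnot
  obtain ⟨ha, hb⟩ | ⟨hb, ha⟩ : a < i ∧ j < b ∨ b < i ∧ j < a := by grind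
  · exact (hf a b ha hb).1
  · exact (hf b a hb ha).2

theorem not_abs_sub_lt_of_lt_of_lt {a b i j l : ℕ} (hij : i ≤ j) (hl : l ≤ j - i + 1)
    (ha : a < i) (hb : j < b) : ¬|(a : ℤ) - (b : ℤ)| < (l : ℤ) := by
  rw [abs_lt]
  omega

theorem pencil_inclusion_exclusion_general (s : ℕ → ℕ → ℝ) (p i j l : ℕ)
    (hi : 1 ≤ i) (hij : i ≤ j) (hjp : j ≤ p) (hl : l ≤ j - i + 1) :
    pencilF s j l + pencilB s p i l - pencilF s p l =
      ∑ a ∈ Finset.Icc i j, ∑ b ∈ Finset.Icc i j,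
        if |(a : ℤ) - (b : ℤ)| < (l : ℤ) then s a b else 0 := by
  have hband : ∀ a b, a < i → j < b →
      (if |(a : ℤ) - (b : ℤ)| < (l : ℤ) then s a b else 0) = 0 ∧
        (if |(b : ℤ) - (a : ℤ)| < (l : ℤ) then s b a else 0) = 0 := fun a b ha hb =>
    ⟨if_neg (not_abs_sub_lt_of_lt_of_lt hij hl ha hb),
      if_neg (abs_sub_comm (b : ℤ) a ▸ not_abs_sub_lt_of_lt_of_lt hij hl ha hb)⟩
  rw [pencilF, pencilB, pencilF, sub_eq_iff_eq_add']
  exact sum_Icc_sq_add_sum_Icc_sq _ hi hjp hband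

/-- For `1 ≤ i ≤ j ≤ p` and `1 ≤ l ≤ j − i + 1`,
`P(j,l) + P̄(i,l) − P(p,l) = ∑_{i≤a,b≤j, |a−b|<l} s(a,b)`. -/
theorem pencil_inclusion_exclusion (s : ℕ → ℕ → ℝ) (p i j l : ℕ)
    (hi : 1 ≤ i) (hij : i ≤ j) (hjp : j ≤ p) (hl1 : 1 ≤ l) (hl : l ≤ j - i + 1) :
    pencilF s j l + pencilB s p i l - pencilF s p l =
      ∑ a ∈ Finset.Icc i j, ∑ b ∈ Finset.Icc i j,
        if |(a : ℤ) - (b : ℤ)| < (l : ℤ) then s a b else 0 :=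
  pencil_inclusion_exclusion_general s p i j l hi hij hjp hl
end

section
/- Let s : {1,…,p} × {1,…,p} → ℝ be a band similarity matrix of bandwidth h+1, i.e. s(a,b) = 0 whenever |a−b| ≥ h. Let C = {i, …, j} be a set of consecutive indices with 1 ≤ i ≤ j ≤ p, let k = |C| = j − i + 1, and set h_k = min(h, k). Then the pencil identity P(j, h_k) + P̄(i, h_k) = S(C) + P(p, h_k) holds, where S(C) = ∑_{(a,b)∈C×C} s(a,b), P(r,l) = ∑_{1≤a,b≤r, |a−b|<l} s(a,b), and P̄(r,l) = ∑_{r≤a,b≤p, |a−b|<l} s(a,b). -/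
open Finset

lemma ext2 {A B : Finset ℕ} (hAB : A ⊆ B) (F : ℕ → ℕ → ℝ) :
    ∑ a ∈ B, ∑ b ∈ B, (if a ∈ A ∧ b ∈ A then F a b else 0)
      = ∑ a ∈ A, ∑ b ∈ A, F a b := by
  rw [← Finset.sum_subset hAB (fun a _ ha => Finset.sum_eq_zero fun b _ => by simp [ha])]
  apply Finset.sum_congr rfl; intro a ha
  rw [← Finset.sum_subset hAB (fun b _ hb => by simp [hb])]
  exact Finset.sum_congr rfl fun b hb => by simp [ha, hb]

/-- Pencil identity for a band similarity matrix of bandwidth `h+1`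
(`s(a,b) = 0` whenever `|a−b| ≥ h`): for the cluster `C = {i, …, j}` of size
`k = j − i + 1` and `h_k = min(h,k)`, one has
`P(j, h_k) + P̄(i, h_k) = S(C) + P(p, h_k)`. -/
theorem pencil_band_identity (s : ℕ → ℕ → ℝ) (p h i j : ℕ)
    (hband : ∀ a b : ℕ, a ∈ Finset.Icc 1 p → b ∈ Finset.Icc 1 p →
      (h : ℤ) ≤ |(a : ℤ) - (b : ℤ)| → s a b = 0)
    (hi : 1 ≤ i) (hij : i ≤ j) (hjp : j ≤ p) :
    pencilF s j (min h (j - i + 1)) + pencilB s p i (min h (j - i + 1)) =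
      (∑ a ∈ Finset.Icc i j, ∑ b ∈ Finset.Icc i j, s a b)
        + pencilF s p (min h (j - i + 1)) := by
  set l := min h (j - i + 1) with hl
  have hl1 : (l : ℤ) ≤ (j : ℤ) - (i : ℤ) + 1 := by
    have := Nat.min_le_right h (j - i + 1)
    omega
  have e1 : pencilF s j l
      = ∑ a ∈ Icc 1 p, ∑ b ∈ Icc 1 p,
        (if a ∈ Icc 1 j ∧ b ∈ Icc 1 j then
          (if |(a : ℤ) - (b : ℤ)| < (l : ℤ) then s a b else 0) else 0) :=
    (ext2 (Icc_subset_Icc_right hjp) _).symm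
  have e2 : pencilB s p i l
      = ∑ a ∈ Icc 1 p, ∑ b ∈ Icc 1 p,
        (if a ∈ Icc i p ∧ b ∈ Icc i p then
          (if |(a : ℤ) - (b : ℤ)| < (l : ℤ) then s a b else 0) else 0) :=
    (ext2 (Icc_subset_Icc_left hi) _).symm
  have e3 : (∑ a ∈ Icc i j, ∑ b ∈ Icc i j, s a b)
      = ∑ a ∈ Icc 1 p, ∑ b ∈ Icc 1 p,
        (if a ∈ Icc i j ∧ b ∈ Icc i j then s a b else 0) :=
    (ext2 (Icc_subset_Icc hi hjp) _).symm
  rw [e1, e2, e3, pencilF, ← Finset.sum_add_distrib, ← Finset.sum_add_distrib]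
  apply Finset.sum_congr rfl; intro a ha
  rw [← Finset.sum_add_distrib, ← Finset.sum_add_distrib]
  apply Finset.sum_congr rfl; intro b hb
  simp only [mem_Icc] at ha hb ⊢
  by_cases hc : |(a : ℤ) - (b : ℤ)| < (l : ℤ)
  · by_cases h1 : a ≤ j ∧ b ≤ j
    · by_cases h2 : i ≤ a ∧ i ≤ b
      · simp [hc, h1, h2, ha.1, hb.1, ha.2, hb.2]
      · have hB : ¬ ((i ≤ a ∧ a ≤ p) ∧ (i ≤ b ∧ b ≤ p)) := by tauto
        have hC : ¬ ((i ≤ a ∧ a ≤ j) ∧ (i ≤ b ∧ b ≤ j)) := by tauto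
        simp [hc, h1, hB, hC, ha.1, hb.1]; tauto
    · by_cases h2 : i ≤ a ∧ i ≤ b
      · have hA : ¬ ((1 ≤ a ∧ a ≤ j) ∧ (1 ≤ b ∧ b ≤ j)) := by tauto
        have hC : ¬ ((i ≤ a ∧ a ≤ j) ∧ (i ≤ b ∧ b ≤ j)) := by tauto
        simp [hc, h2, hA, hC, ha.2, hb.2]; tauto
      · exfalso
        rcases abs_lt.mp hc with ⟨hc1, hc2⟩
        omega
  · have hc' : (l : ℤ) ≤ |(a : ℤ) - (b : ℤ)| := not_lt.mp hc
    by_cases h3 : i ≤ a ∧ a ≤ j ∧ i ≤ b ∧ b ≤ j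
    · have hab : |(a : ℤ) - (b : ℤ)| ≤ (j : ℤ) - (i : ℤ) := by
        rcases abs_cases ((a : ℤ) - (b : ℤ)) with ⟨he, _⟩ | ⟨he, _⟩ <;> omega
      have hh : (h : ℤ) ≤ |(a : ℤ) - (b : ℤ)| := by
        have hmin : (l : ℤ) = min (h : ℤ) ((j : ℤ) - (i : ℤ) + 1) := by
          simp [hl]; omega
        rw [hmin] at hc'
        rcases le_total (h : ℤ) ((j : ℤ) - (i : ℤ) + 1) with hle | hle
        · rwa [min_eq_left hle] at hc'
        · rw [min_eq_right hle] at hc'; omega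
      have hs := hband a b (by simp [mem_Icc]; omega) (by simp [mem_Icc]; omega) hh
      simp [hc, h3, hs]
    · have hC : ¬ ((i ≤ a ∧ a ≤ j) ∧ (i ≤ b ∧ b ≤ j)) := by tauto
      simp [hc, hC]
end
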